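/- Translation principle, part 2: Let f : C → D be a morphism of Banach chain complexes with dual f' : D' → C'. If H^*(f') : H^*(D') → H^*(C') is an isometric isomorphism in every degree (with respect to the induced semi-norms), then H_*(f) : H_*(C) → H_*(D) is an isometric isomorphism in every degree. -/

import Mathlib

/-!
Exactness of a Banach complex can be read off its dual. If every dual cocycle in degree `n` is a
coboundary, every dual cocycle kills the cycles, so by Hahn–Banach every cycle lies in the closure
of the boundaries. If every dual cocycle in degree `n + 1` is a coboundary, the transpose
`γ ↦ γ ∘ ∂` maps onto the annihilator of `ker ∂`, and the open mapping theorem bounds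
`dist(w, ker ∂)` by a multiple of `‖∂ w‖`; hence `∂` has closed range. The mapping cone of `f` has
acyclic dual exactly because `H^*(f')` is bijective, so the cone is acyclic and `H_*(f)` is
bijective.

For the isometry, Hahn–Banach realizes `‖[x]‖` as `θ x` for a cocycle `θ` of norm at most `1`,
while `θ x ≤ ‖[θ]‖ ‖[x]‖` for every cocycle `θ`. Pulling such a `θ` on `D` back along `f`, or
pushing one on `C` forward by surjectivity of `H^*(f')`, and using that `H^*(f')` preserves
`‖[θ]‖`, gives both inequalities.
-/

/-- Cycles of a chain complex indexed over ℕ. -/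
def IsCycle (C : ℕ → Type*) [∀ n, NormedAddCommGroup (C n)] [∀ n, NormedSpace ℝ (C n)]
    (d : ∀ n, C (n + 1) →L[ℝ] C n) : ∀ n, C n → Prop
  | 0, _ => True
  | (n + 1), x => d n x = 0

/-- Coboundaries of the dual cochain complex. -/
def IsCobdry (C : ℕ → Type*) [∀ n, NormedAddCommGroup (C n)] [∀ n, NormedSpace ℝ (C n)]
    (d : ∀ n, C (n + 1) →L[ℝ] C n) : ∀ n, (C n →L[ℝ] ℝ) → Prop
  | 0, f => f = 0
  | (n + 1), f => ∃ g : C n →L[ℝ] ℝ, f = g.comp (d n)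

/-- The seminorm of the homology class of a cycle `x` in degree `n`:
the infimum of the norms of the representing cycles `x - ∂ b`. -/
noncomputable def hSeminorm (C : ℕ → Type*) [∀ n, NormedAddCommGroup (C n)]
    [∀ n, NormedSpace ℝ (C n)] (d : ∀ n, C (n + 1) →L[ℝ] C n) (n : ℕ) (x : C n) : ℝ :=
  sInf {r : ℝ | ∃ b : C (n + 1), r = ‖x - d n b‖}

/-- The seminorm of the cohomology class of a cocycle `φ` in degree `n` of the dual
complex: the infimum of the operator norms of the representing cocycles. -/
noncomputable def cSeminorm (C : ℕ → Type*) [∀ n, NormedAddCommGroup (C n)]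
    [∀ n, NormedSpace ℝ (C n)] (d : ∀ n, C (n + 1) →L[ℝ] C n) (n : ℕ)
    (φ : C n →L[ℝ] ℝ) : ℝ :=
  sInf {r : ℝ | ∃ g : C n →L[ℝ] ℝ, IsCobdry C d n g ∧ r = ‖φ - g‖}

open Metric Set

theorem Submodule.exists_dual_vanishing_eq_infDist {E : Type*} [SeminormedAddCommGroup E]
    [NormedSpace ℝ E] (S : Submodule ℝ E) (x : E) :
    ∃ Φ : E →L[ℝ] ℝ, ‖Φ‖ ≤ 1 ∧ (∀ s ∈ S, Φ s = 0) ∧ Φ x = infDist x S := by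
  obtain ⟨g, hg, hgx⟩ := exists_dual_vector'' ℝ (S.mkQ x)
  refine ⟨g.comp S.mkQL, ?_, fun s hs => ?_, ?_⟩
  · refine (g.comp S.mkQL).opNorm_le_bound zero_le_one fun y => ?_
    calc ‖g (S.mkQ y)‖ ≤ ‖g‖ * ‖S.mkQ y‖ := g.le_opNorm _
      _ ≤ 1 * ‖y‖ := mul_le_mul hg (Submodule.Quotient.norm_mk_le S y) (norm_nonneg _) zero_le_one
  · simp [(Submodule.Quotient.mk_eq_zero S).2 hs]
  · exact hgx.trans (QuotientAddGroup.norm_mk (S := S.toAddSubgroup) x)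

namespace ContinuousLinearMap

variable {E F : Type*} [NormedAddCommGroup E] [NormedSpace ℝ E]
  [NormedAddCommGroup F] [NormedSpace ℝ F]

theorem mem_closure_range_of_dual (T : E →L[ℝ] F) {z : F}
    (h : ∀ Φ : F →L[ℝ] ℝ, Φ.comp T = 0 → Φ z = 0) : z ∈ closure (range T) := by
  obtain ⟨Φ, -, hΦT, hΦz⟩ := T.range.exists_dual_vanishing_eq_infDist z
  rw [LinearMap.coe_range, coe_coe] at hΦz
  rw [mem_closure_iff_infDist_zero (range_nonempty T), ← hΦz]
  exact h Φ (ext fun w => hΦT _ ⟨w, rfl⟩)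

theorem exists_infDist_ker_le (T : E →L[ℝ] F)
    (h : ∀ Φ : E →L[ℝ] ℝ, (∀ w, T w = 0 → Φ w = 0) → ∃ γ : F →L[ℝ] ℝ, γ.comp T = Φ) :
    ∃ M, ∀ w, infDist w T.ker ≤ M * ‖T w‖ := by
  -- `V` is the annihilator of `ker T` and `P` the transpose of `T`, which maps onto `V` by `h`.
  let V : Submodule ℝ (E →L[ℝ] ℝ) := ((compL ℝ T.ker E ℝ).flip T.ker.subtypeL).ker
  have : CompleteSpace V := (isClosed_ker _).completeSpace_coe
  let P : (F →L[ℝ] ℝ) →L[ℝ] V := ((compL ℝ E F ℝ).flip T).codRestrict V fun γ => by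
    ext ⟨w, hw⟩; simp [show T w = 0 from hw]
  have hP : Function.Surjective P := fun ⟨Φ, hΦ⟩ => by
    obtain ⟨γ, hγ⟩ := h Φ fun w hw => congr($hΦ ⟨w, hw⟩)
    exact ⟨γ, Subtype.ext hγ⟩
  -- `P` is repackaged so that `V` carries its normed-group structure rather than the submodule one.
  obtain ⟨M, hM, hPM⟩ := exists_preimage_norm_le (E := F →L[ℝ] ℝ) (F := V) (σ := RingHom.id ℝ)
    ⟨P.toLinearMap, P.continuous⟩ hP
  refine ⟨M, fun w => ?_⟩
  obtain ⟨Φ, hΦ, hΦker, hΦw⟩ := T.ker.exists_dual_vanishing_eq_infDist w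
  obtain ⟨γ, hγΦ, hγ⟩ := hPM ⟨Φ, by ext ⟨v, hv⟩; exact hΦker v hv⟩
  have : γ (T w) = Φ w := congr($(congr(Subtype.val $hγΦ)) w)
  calc infDist w T.ker = γ (T w) := by rw [this, hΦw]
    _ ≤ ‖γ‖ * ‖T w‖ := (le_abs_self _).trans (γ.le_opNorm _)
    _ ≤ M * ‖T w‖ := by
      gcongr
      exact hγ.trans (mul_le_of_le_one_right hM.le hΦ)

theorem isClosed_range_of_infDist_ker_le [CompleteSpace E] (T : E →L[ℝ] F) (M : ℝ)
    (h : ∀ w, infDist w T.ker ≤ M * ‖T w‖) : IsClosed (range T) := by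
  let T' := T.ker.liftQL T le_rfl
  have hT' : AntilipschitzWith M.toNNReal T' := T'.antilipschitz_of_bound fun q => by
    obtain ⟨w, rfl⟩ := T.ker.mkQ_surjective q
    calc ‖T.ker.mkQ w‖ = infDist w T.ker := QuotientAddGroup.norm_mk (S := T.ker.toAddSubgroup) w
      _ ≤ M * ‖T w‖ := h w
      _ ≤ M.toNNReal * ‖T' (T.ker.mkQ w)‖ :=
          mul_le_mul_of_nonneg_right M.le_coe_toNNReal (norm_nonneg _)
  have : range T' = range T := by
    rw [← T.ker.mkQ_surjective.range_comp]
    rfl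
  rw [← this]
  exact hT'.isClosed_range T'.uniformContinuous

theorem isClosed_range_of_dual [CompleteSpace E] (T : E →L[ℝ] F)
    (h : ∀ Φ : E →L[ℝ] ℝ, (∀ w, T w = 0 → Φ w = 0) → ∃ γ : F →L[ℝ] ℝ, γ.comp T = Φ) :
    IsClosed (range T) :=
  have ⟨M, hM⟩ := T.exists_infDist_ker_le h
  T.isClosed_range_of_infDist_ker_le M hM

end ContinuousLinearMap

theorem Real.le_csInf_mul_csInf {a : ℝ} {s t : Set ℝ} (hs : s.Nonempty) (ht : t.Nonempty)
    (hs₀ : ∀ x ∈ s, 0 ≤ x) (ht₀ : ∀ y ∈ t, 0 ≤ y) (h : ∀ x ∈ s, ∀ y ∈ t, a ≤ x * y) :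
    a ≤ sInf s * sInf t := by
  have hx : ∀ x ∈ s, a ≤ x * sInf t := fun x hx => by
    rw [← smul_eq_mul, ← Real.sInf_smul_of_nonneg (hs₀ x hx)]
    exact le_csInf ht.smul_set (by rintro _ ⟨y, hy, rfl⟩; exact h x hx y hy)
  rw [mul_comm, ← smul_eq_mul, ← Real.sInf_smul_of_nonneg (Real.sInf_nonneg ht₀)]
  refine le_csInf hs.smul_set ?_
  rintro _ ⟨x, hx', rfl⟩
  exact (hx x hx').trans_eq (mul_comm _ _)

section ChainComplex

variable {C : ℕ → Type*} [∀ n, NormedAddCommGroup (C n)] [∀ n, NormedSpace ℝ (C n)]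
  {d : ∀ n, C (n + 1) →L[ℝ] C n}

theorem IsCobdry.zero (n : ℕ) : IsCobdry C d n 0 := by
  cases n with
  | zero => rfl
  | succ m => exact ⟨0, rfl⟩

theorem IsCobdry.neg {n : ℕ} {g : C n →L[ℝ] ℝ} (hg : IsCobdry C d n g) : IsCobdry C d n (-g) := by
  cases n with
  | zero => exact neg_eq_zero.2 hg
  | succ m =>
    obtain ⟨a, rfl⟩ := hg
    exact ⟨-a, rfl⟩

theorem IsCobdry.apply_eq_zero {n : ℕ} {g : C n →L[ℝ] ℝ} {x : C n}
    (hg : IsCobdry C d n g) (hx : IsCycle C d n x) : g x = 0 := by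
  cases n with
  | zero => rw [show g = 0 from hg, zero_apply]
  | succ m =>
    obtain ⟨a, rfl⟩ := hg
    exact (congrArg a hx).trans (map_zero a)

theorem isCycle_apply (hd : ∀ n x, d n (d (n + 1) x) = 0) (n : ℕ) (b : C (n + 1)) :
    IsCycle C d n (d n b) := by
  cases n with
  | zero => trivial
  | succ m => exact hd m b

theorem IsCobdry.comp_eq_zero (hd : ∀ n x, d n (d (n + 1) x) = 0) {n : ℕ} {g : C n →L[ℝ] ℝ}
    (hg : IsCobdry C d n g) : g.comp (d n) = 0 :=
  ContinuousLinearMap.ext fun _ => hg.apply_eq_zero (isCycle_apply hd n _)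

theorem hSeminorm_eq_infDist (n : ℕ) (x : C n) :
    hSeminorm C d n x = infDist x (range (d n)) := by
  refine le_antisymm ?_ (le_csInf ⟨_, 0, rfl⟩ ?_)
  · refine (le_infDist (range_nonempty _)).2 ?_
    rintro _ ⟨b, rfl⟩
    exact csInf_le ⟨0, by rintro _ ⟨_, rfl⟩; exact norm_nonneg _⟩ ⟨b, dist_eq_norm _ _⟩
  · rintro _ ⟨b, rfl⟩
    exact (infDist_le_dist_of_mem (mem_range_self b)).trans_eq (dist_eq_norm _ _)

theorem hSeminorm_nonneg (n : ℕ) (x : C n) : 0 ≤ hSeminorm C d n x :=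
  (hSeminorm_eq_infDist n x).symm ▸ infDist_nonneg

theorem cSeminorm_le_norm_sub {n : ℕ} (φ : C n →L[ℝ] ℝ) {g : C n →L[ℝ] ℝ}
    (hg : IsCobdry C d n g) : cSeminorm C d n φ ≤ ‖φ - g‖ :=
  csInf_le ⟨0, by rintro _ ⟨_, _, rfl⟩; exact norm_nonneg _⟩ ⟨g, hg, rfl⟩

theorem exists_cocycle_eq_hSeminorm (n : ℕ) (x : C n) :
    ∃ Φ : C n →L[ℝ] ℝ, ‖Φ‖ ≤ 1 ∧ Φ.comp (d n) = 0 ∧ Φ x = hSeminorm C d n x := by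
  obtain ⟨Φ, hΦ, hΦd, hΦx⟩ := (d n).range.exists_dual_vanishing_eq_infDist x
  refine ⟨Φ, hΦ, ContinuousLinearMap.ext fun b => hΦd _ ⟨b, rfl⟩, ?_⟩
  rw [hΦx, hSeminorm_eq_infDist, LinearMap.coe_range, ContinuousLinearMap.coe_coe]

theorem apply_le_cSeminorm_mul_hSeminorm (hd : ∀ n x, d n (d (n + 1) x) = 0) {n : ℕ}
    {θ : C n →L[ℝ] ℝ} (hθ : θ.comp (d n) = 0) {x : C n} (hx : IsCycle C d n x) :
    θ x ≤ cSeminorm C d n θ * hSeminorm C d n x := by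
  refine Real.le_csInf_mul_csInf ⟨_, 0, IsCobdry.zero n, rfl⟩ ⟨_, 0, rfl⟩
    (by rintro _ ⟨_, _, rfl⟩; exact norm_nonneg _) (by rintro _ ⟨_, rfl⟩; exact norm_nonneg _) ?_
  rintro _ ⟨g, hg, rfl⟩ _ ⟨b, rfl⟩
  have hθb : θ (d n b) = 0 := congr($hθ b)
  have hgb : g (d n b) = 0 := congr($(hg.comp_eq_zero hd) b)
  calc θ x = (θ - g) (x - d n b) := by simp [hθb, hgb, hg.apply_eq_zero hx]
    _ ≤ ‖θ - g‖ * ‖x - d n b‖ := (le_abs_self _).trans ((θ - g).le_opNorm _)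

theorem exists_eq_of_isCycle_of_dual_acyclic [∀ n, CompleteSpace (C n)]
    (hd : ∀ n x, d n (d (n + 1) x) = 0)
    (hdual : ∀ n (Φ : C n →L[ℝ] ℝ), Φ.comp (d n) = 0 → IsCobdry C d n Φ)
    {n : ℕ} {z : C n} (hz : IsCycle C d n z) : ∃ w, d n w = z := by
  have hclosed : IsClosed (range (d n)) := (d n).isClosed_range_of_dual fun Φ hΦ => by
    obtain ⟨γ, hγ⟩ := hdual (n + 1) Φ (ContinuousLinearMap.ext fun w => hΦ _ (hd n w))
    exact ⟨γ, hγ.symm⟩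
  have hdense : z ∈ closure (range (d n)) :=
    (d n).mem_closure_range_of_dual fun Φ hΦ => (hdual n Φ hΦ).apply_eq_zero hz
  rwa [hclosed.closure_eq] at hdense

end ChainComplex

section ChainMap

variable {C D : ℕ → Type*} [∀ n, NormedAddCommGroup (C n)] [∀ n, NormedAddCommGroup (D n)]
  [∀ n, NormedSpace ℝ (C n)] [∀ n, NormedSpace ℝ (D n)]
  {dC : ∀ n, C (n + 1) →L[ℝ] C n} {dD : ∀ n, D (n + 1) →L[ℝ] D n} {f : ∀ n, C n →L[ℝ] D n}

theorem IsCycle.map (hf : ∀ n x, f n (dC n x) = dD n (f (n + 1) x)) {n : ℕ} {x : C n}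
    (hx : IsCycle C dC n x) : IsCycle D dD n (f n x) := by
  cases n with
  | zero => trivial
  | succ m => exact (hf m x).symm.trans ((congrArg (f m) hx).trans (map_zero _))

theorem hSeminorm_map_eq (hC : ∀ n x, dC n (dC (n + 1) x) = 0)
    (hD : ∀ n x, dD n (dD (n + 1) x) = 0) (hf : ∀ n x, f n (dC n x) = dD n (f (n + 1) x))
    {n : ℕ}
    (hsurj : ∀ φ : C n →L[ℝ] ℝ, φ.comp (dC n) = 0 →
        ∃ ψ : D n →L[ℝ] ℝ, ψ.comp (dD n) = 0 ∧ IsCobdry C dC n (φ - ψ.comp (f n)))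
    (hiso : ∀ ψ : D n →L[ℝ] ℝ, ψ.comp (dD n) = 0 →
        cSeminorm C dC n (ψ.comp (f n)) = cSeminorm D dD n ψ)
    {x : C n} (hx : IsCycle C dC n x) :
    hSeminorm D dD n (f n x) = hSeminorm C dC n x := by
  apply le_antisymm
  · obtain ⟨ψ, hψ, hψd, hψx⟩ := exists_cocycle_eq_hSeminorm (d := dD) n (f n x)
    have hψf : (ψ.comp (f n)).comp (dC n) = 0 := ContinuousLinearMap.ext fun b => by
      simpa [hf] using congr($hψd (f (n + 1) b))
    calc hSeminorm D dD n (f n x) = ψ.comp (f n) x := hψx.symm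
      _ ≤ cSeminorm C dC n (ψ.comp (f n)) * hSeminorm C dC n x :=
        apply_le_cSeminorm_mul_hSeminorm hC hψf hx
      _ ≤ hSeminorm C dC n x := by
        refine mul_le_of_le_one_left (hSeminorm_nonneg n x) ?_
        rw [hiso ψ hψd]
        exact (cSeminorm_le_norm_sub ψ (IsCobdry.zero n)).trans (by rwa [sub_zero])
  · obtain ⟨φ, hφ, hφd, hφx⟩ := exists_cocycle_eq_hSeminorm (d := dC) n x
    obtain ⟨ψ, hψd, hcob⟩ := hsurj φ hφd
    calc hSeminorm C dC n x = ψ (f n x) := by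
          rw [← hφx, ← sub_eq_zero]
          exact hcob.apply_eq_zero hx
      _ ≤ cSeminorm D dD n ψ * hSeminorm D dD n (f n x) :=
        apply_le_cSeminorm_mul_hSeminorm hD hψd (hx.map hf)
      _ ≤ hSeminorm D dD n (f n x) := by
        refine mul_le_of_le_one_left (hSeminorm_nonneg n _) ?_
        rw [← hiso ψ hψd]
        exact (cSeminorm_le_norm_sub _ hcob.neg).trans (by rwa [sub_neg_eq_add, add_sub_cancel])

end ChainMap

namespace MappingCone

open ContinuousLinearMap

abbrev Shifted (C : ℕ → Type*) : ℕ → Type _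
  | 0 => PUnit
  | n + 1 => C n

section Shifted

variable {C : ℕ → Type*} [∀ n, NormedAddCommGroup (C n)] [∀ n, NormedSpace ℝ (C n)]

instance : ∀ n, NormedAddCommGroup (Shifted C n)
  | 0 => inferInstanceAs (NormedAddCommGroup PUnit)
  | n + 1 => inferInstanceAs (NormedAddCommGroup (C n))

noncomputable instance : ∀ n, NormedSpace ℝ (Shifted C n)
  | 0 => inferInstanceAs (NormedSpace ℝ PUnit)
  | n + 1 => inferInstanceAs (NormedSpace ℝ (C n))

instance [∀ n, CompleteSpace (C n)] : ∀ n, CompleteSpace (Shifted C n)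
  | 0 => inferInstanceAs (CompleteSpace PUnit)
  | n + 1 => inferInstanceAs (CompleteSpace (C n))

noncomputable def shiftedD (dC : ∀ n, C (n + 1) →L[ℝ] C n) :
    ∀ n, Shifted C (n + 1) →L[ℝ] Shifted C n
  | 0 => 0
  | n + 1 => -dC n

variable {dC : ∀ n, C (n + 1) →L[ℝ] C n}

theorem shiftedD_eq_zero_iff {n : ℕ} {x : C n} : shiftedD dC n x = 0 ↔ IsCycle C dC n x := by
  cases n with
  | zero => exact iff_of_true rfl trivial
  | succ m => exact neg_eq_zero

theorem _root_.IsCobdry.exists_comp_shiftedD_eq {n : ℕ} {g : C n →L[ℝ] ℝ} (hg : IsCobdry C dC n g) :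
    ∃ γ : Shifted C n →L[ℝ] ℝ, γ.comp (shiftedD dC n) = g := by
  cases n with
  | zero => exact ⟨0, (zero_comp _).trans hg.symm⟩
  | succ m =>
    obtain ⟨a, rfl⟩ := hg
    refine ⟨-a, ext fun x => ?_⟩
    show -a (-dC m x) = a (dC m x)
    rw [map_neg, neg_neg]

end Shifted

variable {C D : ℕ → Type*} [∀ n, NormedAddCommGroup (C n)] [∀ n, NormedAddCommGroup (D n)]
  [∀ n, NormedSpace ℝ (C n)] [∀ n, NormedSpace ℝ (D n)]

abbrev Cone (C D : ℕ → Type*) (n : ℕ) : Type _ := Shifted C n × D n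

noncomputable def coneD (dC : ∀ n, C (n + 1) →L[ℝ] C n) (dD : ∀ n, D (n + 1) →L[ℝ] D n)
    (f : ∀ n, C n →L[ℝ] D n) (n : ℕ) : Cone C D (n + 1) →L[ℝ] Cone C D n :=
  ((shiftedD dC n).comp (fst ℝ _ _)).prod ((f n).comp (fst ℝ _ _) + (dD n).comp (snd ℝ _ _))

variable {dC : ∀ n, C (n + 1) →L[ℝ] C n} {dD : ∀ n, D (n + 1) →L[ℝ] D n} {f : ∀ n, C n →L[ℝ] D n}

theorem coneD_coneD (hC : ∀ n x, dC n (dC (n + 1) x) = 0)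
    (hD : ∀ n x, dD n (dD (n + 1) x) = 0) (hf : ∀ n x, f n (dC n x) = dD n (f (n + 1) x))
    (n : ℕ) (p : Cone C D (n + 2)) : coneD dC dD f n (coneD dC dD f (n + 1) p) = 0 := by
  refine Prod.ext (shiftedD_eq_zero_iff.2 ?_) ?_
  · show IsCycle C dC n (-dC n p.1)
    simpa using isCycle_apply hC n (-p.1)
  · show f n (-dC n p.1) + dD n (f (n + 1) p.1 + dD (n + 1) p.2) = 0
    rw [map_add, hD, add_zero, map_neg, hf, neg_add_cancel]

theorem isCobdry_coprod_succ {m : ℕ} (hf : ∀ n x, f n (dC n x) = dD n (f (n + 1) x))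
    (hinj : ∀ ψ : D (m + 1) →L[ℝ] ℝ, ψ.comp (dD (m + 1)) = 0 →
        IsCobdry C dC (m + 1) (ψ.comp (f (m + 1))) → IsCobdry D dD (m + 1) ψ)
    (hsurj : ∀ φ : C m →L[ℝ] ℝ, φ.comp (dC m) = 0 →
        ∃ ψ : D m →L[ℝ] ℝ, ψ.comp (dD m) = 0 ∧ IsCobdry C dC m (φ - ψ.comp (f m)))
    {α : C m →L[ℝ] ℝ} {β : D (m + 1) →L[ℝ] ℝ} (hβ : β.comp (dD (m + 1)) = 0)
    (hαβ : β.comp (f (m + 1)) = α.comp (dC m)) :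
    IsCobdry (Cone C D) (coneD dC dD f) (m + 1) (α.coprod β) := by
  -- `β = δ ∘ ∂` by injectivity of `H^*(f')`; surjectivity then moves the cocycle `α - δ ∘ f`
  -- of `C` to a cocycle `ψ` of `D`, and `(γ, δ + ψ)` is the primitive.
  obtain ⟨δ, hδ⟩ := hinj β hβ ⟨α, hαβ⟩
  have hφ : (α - δ.comp (f m)).comp (dC m) = 0 := ext fun c => by
    have h₁ : β (f (m + 1) c) = α (dC m c) := congr($hαβ c)
    have h₂ : β (f (m + 1) c) = δ (dD m (f (m + 1) c)) := congr($hδ (f (m + 1) c))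
    simp [hf, ← h₁, h₂]
  obtain ⟨ψ, hψ, hcob⟩ := hsurj _ hφ
  obtain ⟨γ, hγ⟩ := IsCobdry.exists_comp_shiftedD_eq hcob
  refine ⟨γ.coprod (δ + ψ), ext fun ⟨c, y⟩ => ?_⟩
  have h₁ : γ (shiftedD dC m c) = α c - δ (f m c) - ψ (f m c) := congr($hγ c)
  have h₂ : β y = δ (dD m y) := congr($hδ y)
  have h₃ : ψ (dD m y) = 0 := congr($hψ y)
  show α c + β y = γ (shiftedD dC m c) + (δ + ψ) (f m c + dD m y)
  simp only [h₁, h₂, add_apply, map_add, h₃]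
  ring

theorem cone_dual_acyclic (hf : ∀ n x, f n (dC n x) = dD n (f (n + 1) x))
    (hinj : ∀ n, ∀ ψ : D n →L[ℝ] ℝ, ψ.comp (dD n) = 0 →
        IsCobdry C dC n (ψ.comp (f n)) → IsCobdry D dD n ψ)
    (hsurj : ∀ n, ∀ φ : C n →L[ℝ] ℝ, φ.comp (dC n) = 0 →
        ∃ ψ : D n →L[ℝ] ℝ, ψ.comp (dD n) = 0 ∧ IsCobdry C dC n (φ - ψ.comp (f n)))
    (n : ℕ) (Φ : Cone C D n →L[ℝ] ℝ) (hΦ : Φ.comp (coneD dC dD f n) = 0) :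
    IsCobdry (Cone C D) (coneD dC dD f) n Φ := by
  rw [← Φ.coprod_comp_inl_inr] at hΦ ⊢
  generalize Φ.comp (inl ℝ _ _) = α, Φ.comp (inr ℝ _ _) = β at hΦ ⊢
  have hΦ' : ∀ c y, α (shiftedD dC n c) + β (f n c + dD n y) = 0 := fun c y => congr($hΦ (c, y))
  have hβ : β.comp (dD n) = 0 := ext fun y => by simpa using hΦ' 0 y
  have hαβ : ∀ c, α (shiftedD dC n c) + β (f n c) = 0 := fun c => by simpa using hΦ' c 0
  cases n with
  | zero =>
    have hα : α = 0 := ext fun x => by rw [Subsingleton.elim x 0, map_zero, zero_apply]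
    have hβf : IsCobdry C dC 0 (β.comp (f 0)) := ext fun c => by simpa [hα] using hαβ c
    show α.coprod β = 0
    rw [hα, hinj 0 β hβ hβf]
    exact ext fun _ => add_zero 0
  | succ m =>
    refine isCobdry_coprod_succ hf (hinj (m + 1)) (hsurj m) hβ (ext fun c => ?_)
    have h := hαβ c
    change α (-dC m c) + β (f (m + 1) c) = 0 at h
    rw [map_neg, neg_add_eq_zero] at h
    exact h.symm

theorem exists_eq_of_map_eq_boundary {n : ℕ}
    (hcone : ∀ z, IsCycle (Cone C D) (coneD dC dD f) (n + 1) z →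
      ∃ w, coneD dC dD f (n + 1) w = z)
    {x : C n} (hx : IsCycle C dC n x) {b : D (n + 1)} (hb : dD n b = f n x) :
    ∃ a, dC n a = x := by
  have hz : IsCycle (Cone C D) (coneD dC dD f) (n + 1) (x, -b) := by
    show coneD dC dD f n (x, -b) = 0
    refine Prod.ext (shiftedD_eq_zero_iff.2 hx) ?_
    show f n x + dD n (-b) = 0
    rw [map_neg, hb, add_neg_cancel]
  obtain ⟨w, hw⟩ := hcone _ hz
  have h : -dC n w.1 = x := congr($hw.1)
  exact ⟨-w.1, by rw [map_neg, h]⟩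

theorem exists_isCycle_sub_map_eq_boundary {n : ℕ}
    (hcone : ∀ z, IsCycle (Cone C D) (coneD dC dD f) n z → ∃ w, coneD dC dD f n w = z)
    {y : D n} (hy : IsCycle D dD n y) : ∃ x, IsCycle C dC n x ∧ ∃ b, y - f n x = dD n b := by
  have hz : IsCycle (Cone C D) (coneD dC dD f) n (0, y) := by
    cases n with
    | zero => trivial
    | succ m =>
      show coneD dC dD f m (0, y) = 0
      refine Prod.ext (map_zero (shiftedD dC m)) ?_
      show f m 0 + dD m y = 0
      rw [map_zero, zero_add]
      exact hy
  obtain ⟨⟨x, b⟩, hw⟩ := hcone _ hz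
  have h₁ : shiftedD dC n x = 0 := congr($hw.1)
  have h₂ : f n x + dD n b = y := congr($hw.2)
  exact ⟨x, shiftedD_eq_zero_iff.1 h₁, b, by rw [← h₂, add_sub_cancel_left]⟩

end MappingCone

/-- Translation principle, part 2: if `H^*(f')` is an isometric
isomorphism in every degree, then `H_*(f)` is an isometric isomorphism in every
degree. -/
theorem stmt6
    (C D : ℕ → Type*) [∀ n, NormedAddCommGroup (C n)] [∀ n, NormedAddCommGroup (D n)]
    [∀ n, NormedSpace ℝ (C n)] [∀ n, NormedSpace ℝ (D n)]
    [∀ n, CompleteSpace (C n)] [∀ n, CompleteSpace (D n)]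
    (dC : ∀ n, C (n + 1) →L[ℝ] C n) (dD : ∀ n, D (n + 1) →L[ℝ] D n)
    (hC : ∀ n x, dC n (dC (n + 1) x) = 0) (hD : ∀ n x, dD n (dD (n + 1) x) = 0)
    (f : ∀ n, C n →L[ℝ] D n)
    (hf : ∀ n x, f n (dC n x) = dD n (f (n + 1) x))
    -- `H^*(f')` is an isomorphism in every degree:
    (hinj : ∀ n, ∀ ψ : D n →L[ℝ] ℝ, ψ.comp (dD n) = 0 →
        IsCobdry C dC n (ψ.comp (f n)) → IsCobdry D dD n ψ)
    (hsurj : ∀ n, ∀ φ : C n →L[ℝ] ℝ, φ.comp (dC n) = 0 →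
        ∃ ψ : D n →L[ℝ] ℝ, ψ.comp (dD n) = 0 ∧ IsCobdry C dC n (φ - ψ.comp (f n)))
    -- ... and it is isometric:
    (hiso : ∀ n, ∀ ψ : D n →L[ℝ] ℝ, ψ.comp (dD n) = 0 →
        cSeminorm C dC n (ψ.comp (f n)) = cSeminorm D dD n ψ) :
    -- then `H_*(f)` is an isometric isomorphism in every degree:
    ((∀ n, ∀ x, IsCycle C dC n x → (∃ b, dD n b = f n x) → ∃ a, dC n a = x) ∧
     (∀ n, ∀ y, IsCycle D dD n y → ∃ x, IsCycle C dC n x ∧ ∃ b, y - f n x = dD n b)) ∧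
    (∀ n, ∀ x, IsCycle C dC n x →
      hSeminorm D dD n (f n x) = hSeminorm C dC n x) := by
  have hcone : ∀ n z, IsCycle (MappingCone.Cone C D) (MappingCone.coneD dC dD f) n z →
      ∃ w, MappingCone.coneD dC dD f n w = z := fun _ _ =>
    exists_eq_of_isCycle_of_dual_acyclic (MappingCone.coneD_coneD hC hD hf)
      (MappingCone.cone_dual_acyclic hf hinj hsurj)
  refine ⟨⟨fun n x hx ⟨b, hb⟩ => ?_, fun n y hy => ?_⟩, fun n x hx => ?_⟩
  · exact MappingCone.exists_eq_of_map_eq_boundary (hcone (n + 1)) hx hb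
  · exact MappingCone.exists_isCycle_sub_map_eq_boundary (hcone n) hy
  · exact hSeminorm_map_eq hC hD hf (hsurj n) (hiso n) hx
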